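/- Every formula of the fairness fragment LTL_{FG,GF}(F,G,X) — i.e., every Boolean combination of formulas of the form FG φ or GF φ where φ ∈ LTL(F,G,X) — is equivalent to a Boolean combination of formulas of the form FG ψ or GF ψ with ψ ∈ LTL(X) (ψ contains only Boolean connectives and the next operator X). -/

import Mathlib

/-!
Every formula `φ` of `LTL(F,G,X)` admits a finite case analysis: guards `γᵢ` in the fairness
fragment over `LTL(X)`, one of which holds on every word, and bodies `ξᵢ ∈ LTL(X)` such that on
a word satisfying `γᵢ` the formula `φ` agrees with `ξᵢ` on all but finitely many suffixes.
The only nontrivial step is a temporal operator: on a word where `α` eventually agrees with `ξ`,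
the formula `F α` is eventually constant, true if `GF ξ` holds and false if `FG ¬ξ` holds
(dually for `G α`), so each case splits into two. Finally `GF φ` and `FG φ` only see the
suffixes, so they are the disjunctions of `γᵢ ∧ GF ξᵢ`, respectively `γᵢ ∧ FG ξᵢ`.
-/

inductive LTL (Ap : Type) : Type
  | tt : LTL Ap
  | ff : LTL Ap
  | atom : Ap → LTL Ap
  | natom : Ap → LTL Ap
  | and : LTL Ap → LTL Ap → LTL Ap
  | or : LTL Ap → LTL Ap → LTL Ap
  | next : LTL Ap → LTL Ap
  | untl : LTL Ap → LTL Ap → LTL Ap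
  | release : LTL Ap → LTL Ap → LTL Ap

def LTL.F {Ap : Type} (φ : LTL Ap) : LTL Ap := LTL.untl LTL.tt φ
def LTL.G {Ap : Type} (φ : LTL Ap) : LTL Ap := LTL.release LTL.ff φ

/-- suffix w_i of the ω-word w -/
def suff {Ap : Type} (w : ℕ → Set Ap) (i : ℕ) : ℕ → Set Ap := fun j => w (i + j)

/-- LTL satisfaction relation w ⊨ φ -/
def Sat {Ap : Type} : (ℕ → Set Ap) → LTL Ap → Prop
  | _, .tt => True
  | _, .ff => False
  | w, .atom a => a ∈ w 0
  | w, .natom a => a ∉ w 0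
  | w, .and φ ψ => Sat w φ ∧ Sat w ψ
  | w, .or φ ψ => Sat w φ ∨ Sat w ψ
  | w, .next φ => Sat (suff w 1) φ
  | w, .untl φ ψ => ∃ i, Sat (suff w i) ψ ∧ ∀ j < i, Sat (suff w j) φ
  | w, .release φ ψ =>
      (∀ i, Sat (suff w i) ψ) ∨ ∃ i, Sat (suff w i) φ ∧ ∀ j, j ≤ i → Sat (suff w j) ψ

/-- LTL(X): only literals, ∧, ∨ and the next operator -/
inductive OnlyX {Ap : Type} : LTL Ap → Prop
  | tt : OnlyX .tt
  | ff : OnlyX .ff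
  | atom (a : Ap) : OnlyX (.atom a)
  | natom (a : Ap) : OnlyX (.natom a)
  | and {φ ψ : LTL Ap} : OnlyX φ → OnlyX ψ → OnlyX (.and φ ψ)
  | or {φ ψ : LTL Ap} : OnlyX φ → OnlyX ψ → OnlyX (.or φ ψ)
  | next {φ : LTL Ap} : OnlyX φ → OnlyX (.next φ)

/-- LTL(F,G,X): literals, ∧, ∨, F, G and X -/
inductive OnlyFGX {Ap : Type} : LTL Ap → Prop
  | tt : OnlyFGX .tt
  | ff : OnlyFGX .ff
  | atom (a : Ap) : OnlyFGX (.atom a)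
  | natom (a : Ap) : OnlyFGX (.natom a)
  | and {φ ψ : LTL Ap} : OnlyFGX φ → OnlyFGX ψ → OnlyFGX (.and φ ψ)
  | or {φ ψ : LTL Ap} : OnlyFGX φ → OnlyFGX ψ → OnlyFGX (.or φ ψ)
  | next {φ : LTL Ap} : OnlyFGX φ → OnlyFGX (.next φ)
  | evtl {φ : LTL Ap} : OnlyFGX φ → OnlyFGX (LTL.F φ)
  | alws {φ : LTL Ap} : OnlyFGX φ → OnlyFGX (LTL.G φ)

/-- Boolean combinations of FG φ and GF φ with φ satisfying P -/
inductive FairFrag {Ap : Type} (P : LTL Ap → Prop) : LTL Ap → Prop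
  | FG {φ : LTL Ap} : P φ → FairFrag P (LTL.F (LTL.G φ))
  | GF {φ : LTL Ap} : P φ → FairFrag P (LTL.G (LTL.F φ))
  | and {φ ψ : LTL Ap} : FairFrag P φ → FairFrag P ψ → FairFrag P (.and φ ψ)
  | or {φ ψ : LTL Ap} : FairFrag P φ → FairFrag P ψ → FairFrag P (.or φ ψ)

open Filter LTL

section

variable {Ap : Type}

def LTL.neg : LTL Ap → LTL Ap
  | tt => ff
  | ff => tt
  | atom a => natom a
  | natom a => atom a
  | and φ ψ => or φ.neg ψ.neg
  | or φ ψ => and φ.neg ψ.neg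
  | next φ => next φ.neg
  | untl φ ψ => release φ.neg ψ.neg
  | release φ ψ => untl φ.neg ψ.neg

theorem OnlyX.neg {φ : LTL Ap} (h : OnlyX φ) : OnlyX φ.neg := by
  induction h with
  | tt => exact .ff
  | ff => exact .tt
  | atom a => exact .natom a
  | natom a => exact .atom a
  | and _ _ ih₁ ih₂ => exact .or ih₁ ih₂
  | or _ _ ih₁ ih₂ => exact .and ih₁ ih₂
  | next _ ih => exact .next ih

theorem not_exists_until_iff (a b : ℕ → Prop) :
    (¬ ∃ i, b i ∧ ∀ j < i, a j) ↔ (∀ i, ¬ b i) ∨ ∃ i, ¬ a i ∧ ∀ j ≤ i, ¬ b j := by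
  classical
  constructor
  · intro h
    by_cases hb : ∃ i, b i
    · obtain ⟨j, hj, hna⟩ : ∃ j < Nat.find hb, ¬ a j := by
        by_contra! ha
        exact h ⟨_, Nat.find_spec hb, ha⟩
      exact Or.inr ⟨j, hna, fun k hk => Nat.find_min hb (hk.trans_lt hj)⟩
    · exact Or.inl (not_exists.mp hb)
  · rintro (hb | ⟨i, hna, hb⟩) ⟨k, hbk, ha⟩
    · exact hb k hbk
    · exact hna (ha i (lt_of_not_ge fun hki => hb k hki hbk))

theorem sat_neg (w : ℕ → Set Ap) (φ : LTL Ap) : Sat w φ.neg ↔ ¬ Sat w φ := by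
  induction φ generalizing w with
  | tt | ff | atom | natom => simp [LTL.neg, Sat]
  | and φ ψ ihφ ihψ => simp only [LTL.neg, Sat, ihφ, ihψ, not_and_or]
  | or φ ψ ihφ ihψ => simp only [LTL.neg, Sat, ihφ, ihψ, not_or]
  | next φ ih => exact ih _
  | untl φ ψ ihφ ihψ =>
    simp only [LTL.neg, Sat, ihφ, ihψ]
    exact (not_exists_until_iff _ _).symm
  | release φ ψ ihφ ihψ =>
    simp only [LTL.neg, Sat, ihφ, ihψ]
    have := not_exists_until_iff (fun j => ¬ Sat (suff w j) φ) (fun i => ¬ Sat (suff w i) ψ)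
    simp only [not_not] at this
    rw [← this, not_not]

theorem suff_suff (w : ℕ → Set Ap) (i j : ℕ) : suff (suff w i) j = suff w (i + j) := by
  funext k
  simp only [suff, Nat.add_assoc]

variable {w : ℕ → Set Ap} {φ ψ ξ : LTL Ap}

theorem sat_suff_F (p : ℕ) : Sat (suff w p) (F φ) ↔ ∃ q ≥ p, Sat (suff w q) φ := by
  simp only [LTL.F, Sat, suff_suff, and_true, implies_true]
  exact ⟨fun ⟨i, h⟩ => ⟨p + i, by omega, h⟩,
    fun ⟨q, hq, h⟩ => ⟨q - p, by rwa [Nat.add_sub_cancel' hq]⟩⟩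

theorem sat_suff_G (p : ℕ) : Sat (suff w p) (G φ) ↔ ∀ q ≥ p, Sat (suff w q) φ := by
  simp only [LTL.G, Sat, suff_suff, false_and, exists_false, or_false]
  exact ⟨fun h q hq => by simpa [Nat.add_sub_cancel' hq] using h (q - p),
    fun h i => h (p + i) (by omega)⟩

theorem sat_GF : Sat w (G (F φ)) ↔ ∃ᶠ p in atTop, Sat (suff w p) φ := by
  simp only [LTL.G, Sat, false_and, exists_false, or_false, sat_suff_F, frequently_atTop]

theorem sat_FG : Sat w (F (G φ)) ↔ ∀ᶠ p in atTop, Sat (suff w p) φ := by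
  simp only [LTL.F, Sat, and_true, implies_true, sat_suff_G]
  exact eventually_atTop.symm

def EventuallyEquiv (w : ℕ → Set Ap) (φ ψ : LTL Ap) : Prop :=
  ∀ᶠ p in atTop, (Sat (suff w p) φ ↔ Sat (suff w p) ψ)

namespace EventuallyEquiv

theorem next (h : EventuallyEquiv w φ ψ) : EventuallyEquiv w (.next φ) (.next ψ) := by
  simpa only [EventuallyEquiv, Sat, suff_suff] using (tendsto_add_atTop_nat 1).eventually h

theorem sat_GF_iff (h : EventuallyEquiv w φ ψ) : Sat w (G (F φ)) ↔ Sat w (G (F ψ)) := by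
  rw [sat_GF, sat_GF, frequently_congr h]

theorem sat_FG_iff (h : EventuallyEquiv w φ ψ) : Sat w (F (G φ)) ↔ Sat w (F (G ψ)) := by
  rw [sat_FG, sat_FG, eventually_congr h]

theorem F_of_frequently (h : EventuallyEquiv w φ ξ) (hξ : ∃ᶠ p in atTop, Sat (suff w p) ξ) :
    EventuallyEquiv w (F φ) tt := by
  have hφ := frequently_atTop.1 ((frequently_congr h).2 hξ)
  exact Eventually.of_forall fun p => iff_of_true ((sat_suff_F p).2 (hφ p)) trivial

theorem F_of_eventually_not (h : EventuallyEquiv w φ ξ)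
    (hξ : ∀ᶠ p in atTop, ¬ Sat (suff w p) ξ) : EventuallyEquiv w (F φ) ff := by
  have hφ : ∀ᶠ p in atTop, ¬ Sat (suff w p) φ := h.mp (hξ.mono fun _ hn hiff => hiff.not.2 hn)
  refine (eventually_forall_ge_atTop.2 hφ).mono fun p hp => iff_of_false ?_ id
  rw [sat_suff_F]
  exact fun ⟨q, hq, hφq⟩ => hp q hq hφq

theorem G_of_eventually (h : EventuallyEquiv w φ ξ) (hξ : ∀ᶠ p in atTop, Sat (suff w p) ξ) :
    EventuallyEquiv w (G φ) tt := by
  have hφ := eventually_forall_ge_atTop.2 ((eventually_congr h).2 hξ)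
  exact hφ.mono fun p hp => iff_of_true ((sat_suff_G p).2 hp) trivial

theorem G_of_frequently_not (h : EventuallyEquiv w φ ξ)
    (hξ : ∃ᶠ p in atTop, ¬ Sat (suff w p) ξ) : EventuallyEquiv w (G φ) ff := by
  have hφ := frequently_atTop.1 ((frequently_congr (h.mono fun _ => Iff.not)).2 hξ)
  refine Eventually.of_forall fun p => iff_of_false ?_ id
  rw [sat_suff_G]
  obtain ⟨q, hq, hnφ⟩ := hφ p
  exact fun hall => hnφ (hall q hq)

end EventuallyEquiv

structure FairCase (Ap : Type) where
  guard : LTL Ap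
  body : LTL Ap
  guard_fair : FairFrag OnlyX guard
  body_onlyX : OnlyX body

def HasFairCases (φ : LTL Ap) : Prop :=
  ∃ L : List (FairCase Ap), (∀ w, ∃ c ∈ L, Sat w c.guard) ∧
    ∀ c ∈ L, ∀ w, Sat w c.guard → EventuallyEquiv w φ c.body

namespace HasFairCases

theorem of_onlyX (h : OnlyX φ) : HasFairCases φ := by
  refine ⟨[⟨G (F tt), φ, .GF .tt, h⟩], fun w => ⟨_, List.mem_singleton_self _, ?_⟩, ?_⟩
  · exact sat_GF.2 (Frequently.of_forall fun _ => trivial)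
  · simp only [List.mem_singleton, forall_eq]
    exact fun _ _ => Eventually.of_forall fun _ => Iff.rfl

theorem binary (op : LTL Ap → LTL Ap → LTL Ap)
    (hop : ∀ {ξ ζ : LTL Ap}, OnlyX ξ → OnlyX ζ → OnlyX (op ξ ζ))
    (hsat : ∀ {w : ℕ → Set Ap} {φ φ' ψ ψ' : LTL Ap},
      (Sat w φ ↔ Sat w φ') → (Sat w ψ ↔ Sat w ψ') → (Sat w (op φ ψ) ↔ Sat w (op φ' ψ')))
    (hφ : HasFairCases φ) (hψ : HasFairCases ψ) : HasFairCases (op φ ψ) := by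
  obtain ⟨L₁, hcover₁, hagree₁⟩ := hφ
  obtain ⟨L₂, hcover₂, hagree₂⟩ := hψ
  refine ⟨L₁.flatMap fun c₁ => L₂.map fun c₂ => ⟨.and c₁.guard c₂.guard, op c₁.body c₂.body,
    .and c₁.guard_fair c₂.guard_fair, hop c₁.body_onlyX c₂.body_onlyX⟩, fun w => ?_, ?_⟩
  · obtain ⟨c₁, hc₁, hw₁⟩ := hcover₁ w
    obtain ⟨c₂, hc₂, hw₂⟩ := hcover₂ w
    exact ⟨_, List.mem_flatMap.2 ⟨c₁, hc₁, List.mem_map_of_mem hc₂⟩, hw₁, hw₂⟩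
  · simp only [List.forall_mem_flatMap, List.forall_mem_map]
    rintro c₁ hc₁ c₂ hc₂ w ⟨hw₁, hw₂⟩
    exact (hagree₁ c₁ hc₁ w hw₁).mp ((hagree₂ c₂ hc₂ w hw₂).mono fun _ h₂ h₁ => hsat h₁ h₂)

theorem next (h : HasFairCases φ) : HasFairCases (.next φ) := by
  obtain ⟨L, hcover, hagree⟩ := h
  refine ⟨L.map fun c => ⟨c.guard, .next c.body, c.guard_fair, .next c.body_onlyX⟩,
    fun w => ?_, ?_⟩
  · obtain ⟨c, hc, hw⟩ := hcover w
    exact ⟨_, List.mem_map_of_mem hc, hw⟩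
  · simp only [List.forall_mem_map]
    exact fun c hc w hw => (hagree c hc w hw).next

theorem evtl (h : HasFairCases φ) : HasFairCases (F φ) := by
  obtain ⟨L, hcover, hagree⟩ := h
  refine ⟨L.flatMap fun c =>
    [⟨.and c.guard (G (F c.body)), tt, .and c.guard_fair (.GF c.body_onlyX), .tt⟩,
     ⟨.and c.guard (F (G c.body.neg)), ff, .and c.guard_fair (.FG c.body_onlyX.neg), .ff⟩],
    fun w => ?_, ?_⟩
  · obtain ⟨c, hc, hw⟩ := hcover w
    by_cases hinf : ∃ᶠ p in atTop, Sat (suff w p) c.body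
    · exact ⟨_, List.mem_flatMap.2 ⟨c, hc, .head _⟩, hw, sat_GF.2 hinf⟩
    · refine ⟨_, List.mem_flatMap.2 ⟨c, hc, .tail _ (.head _)⟩, hw, sat_FG.2 ?_⟩
      simpa only [sat_neg] using not_frequently.1 hinf
  · simp only [List.forall_mem_flatMap, List.forall_mem_cons, List.not_mem_nil,
      IsEmpty.forall_iff, implies_true, and_true]
    refine fun c hc => ⟨fun w ⟨hw, hinf⟩ => ?_, fun w ⟨hw, hfin⟩ => ?_⟩
    · exact (hagree c hc w hw).F_of_frequently (sat_GF.1 hinf)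
    · exact (hagree c hc w hw).F_of_eventually_not (by simpa only [sat_neg] using sat_FG.1 hfin)

theorem alws (h : HasFairCases φ) : HasFairCases (G φ) := by
  obtain ⟨L, hcover, hagree⟩ := h
  refine ⟨L.flatMap fun c =>
    [⟨.and c.guard (F (G c.body)), tt, .and c.guard_fair (.FG c.body_onlyX), .tt⟩,
     ⟨.and c.guard (G (F c.body.neg)), ff, .and c.guard_fair (.GF c.body_onlyX.neg), .ff⟩],
    fun w => ?_, ?_⟩
  · obtain ⟨c, hc, hw⟩ := hcover w
    by_cases hfin : ∀ᶠ p in atTop, Sat (suff w p) c.body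
    · exact ⟨_, List.mem_flatMap.2 ⟨c, hc, .head _⟩, hw, sat_FG.2 hfin⟩
    · refine ⟨_, List.mem_flatMap.2 ⟨c, hc, .tail _ (.head _)⟩, hw, sat_GF.2 ?_⟩
      simpa only [sat_neg] using not_eventually.1 hfin
  · simp only [List.forall_mem_flatMap, List.forall_mem_cons, List.not_mem_nil,
      IsEmpty.forall_iff, implies_true, and_true]
    refine fun c hc => ⟨fun w ⟨hw, hfin⟩ => ?_, fun w ⟨hw, hinf⟩ => ?_⟩
    · exact (hagree c hc w hw).G_of_eventually (sat_FG.1 hfin)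
    · exact (hagree c hc w hw).G_of_frequently_not (by simpa only [sat_neg] using sat_GF.1 hinf)

end HasFairCases

theorem OnlyFGX.hasFairCases (h : OnlyFGX φ) : HasFairCases φ := by
  induction h with
  | tt => exact .of_onlyX .tt
  | ff => exact .of_onlyX .ff
  | atom a => exact .of_onlyX (.atom a)
  | natom a => exact .of_onlyX (.natom a)
  | and _ _ ih₁ ih₂ => exact .binary LTL.and OnlyX.and and_congr ih₁ ih₂
  | or _ _ ih₁ ih₂ => exact .binary LTL.or OnlyX.or or_congr ih₁ ih₂
  | next _ ih => exact ih.next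
  | evtl _ ih => exact ih.evtl
  | alws _ ih => exact ih.alws

def FairDefinable (P : (ℕ → Set Ap) → Prop) : Prop :=
  ∃ ψ : LTL Ap, FairFrag OnlyX ψ ∧ ∀ w, P w ↔ Sat w ψ

namespace FairDefinable

variable {P Q : (ℕ → Set Ap) → Prop}

theorem congr (hP : FairDefinable P) (h : ∀ w, P w ↔ Q w) : FairDefinable Q :=
  let ⟨ψ, hψ, hPψ⟩ := hP
  ⟨ψ, hψ, fun w => (h w).symm.trans (hPψ w)⟩

theorem and (hP : FairDefinable P) (hQ : FairDefinable Q) : FairDefinable fun w => P w ∧ Q w :=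
  let ⟨ψ, hψ, hPψ⟩ := hP
  let ⟨χ, hχ, hQχ⟩ := hQ
  ⟨.and ψ χ, .and hψ hχ, fun w => and_congr (hPψ w) (hQχ w)⟩

theorem or (hP : FairDefinable P) (hQ : FairDefinable Q) : FairDefinable fun w => P w ∨ Q w :=
  let ⟨ψ, hψ, hPψ⟩ := hP
  let ⟨χ, hχ, hQχ⟩ := hQ
  ⟨.or ψ χ, .or hψ hχ, fun w => or_congr (hPψ w) (hQχ w)⟩

theorem exists_mem {ι : Type*} (L : List ι) {P : ι → (ℕ → Set Ap) → Prop}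
    (h : ∀ i ∈ L, FairDefinable (P i)) : FairDefinable fun w => ∃ i ∈ L, P i w := by
  induction L with
  | nil => exact ⟨G (F ff), .GF .ff, fun w => by simp [sat_GF, Sat]⟩
  | cons i L ih =>
    simp only [List.forall_mem_cons] at h
    exact ((h.1).or (ih h.2)).congr fun w => by simp only [List.mem_cons, exists_eq_or_imp]

end FairDefinable

theorem HasFairCases.fairDefinable_GF (h : HasFairCases φ) :
    FairDefinable fun w => Sat w (G (F φ)) := by
  obtain ⟨L, hcover, hagree⟩ := h
  have hcases : FairDefinable fun w => ∃ c ∈ L, Sat w c.guard ∧ Sat w (G (F c.body)) :=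
    FairDefinable.exists_mem L fun c _ =>
      ⟨.and c.guard (G (F c.body)), .and c.guard_fair (.GF c.body_onlyX), fun _ => Iff.rfl⟩
  refine hcases.congr fun w =>
    ⟨fun ⟨c, hc, hw, hGF⟩ => (hagree c hc w hw).sat_GF_iff.2 hGF, fun hGF => ?_⟩
  obtain ⟨c, hc, hw⟩ := hcover w
  exact ⟨c, hc, hw, (hagree c hc w hw).sat_GF_iff.1 hGF⟩

theorem HasFairCases.fairDefinable_FG (h : HasFairCases φ) :
    FairDefinable fun w => Sat w (F (G φ)) := by
  obtain ⟨L, hcover, hagree⟩ := h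
  have hcases : FairDefinable fun w => ∃ c ∈ L, Sat w c.guard ∧ Sat w (F (G c.body)) :=
    FairDefinable.exists_mem L fun c _ =>
      ⟨.and c.guard (F (G c.body)), .and c.guard_fair (.FG c.body_onlyX), fun _ => Iff.rfl⟩
  refine hcases.congr fun w =>
    ⟨fun ⟨c, hc, hw, hFG⟩ => (hagree c hc w hw).sat_FG_iff.2 hFG, fun hFG => ?_⟩
  obtain ⟨c, hc, hw⟩ := hcover w
  exact ⟨c, hc, hw, (hagree c hc w hw).sat_FG_iff.1 hFG⟩

end

theorem fairness_normal_form {Ap : Type} (φ : LTL Ap) (h : FairFrag OnlyFGX φ) :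
    ∃ ψ : LTL Ap, FairFrag OnlyX ψ ∧ ∀ w : ℕ → Set Ap, Sat w φ ↔ Sat w ψ := by
  induction h with
  | FG hφ => exact hφ.hasFairCases.fairDefinable_FG
  | GF hφ => exact hφ.hasFairCases.fairDefinable_GF
  | and _ _ ih₁ ih₂ => exact FairDefinable.and ih₁ ih₂
  | or _ _ ih₁ ih₂ => exact FairDefinable.or ih₁ ih₂
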